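/- With L ∈ ℝ^{2n×2} of full column rank and the optimal scaling D̂ = [[ĉ, f̂],[0, ĉ⁻¹]] where ĉ = ‖L₂‖₂/β and f̂ = −(L₁ᵀL₂)/(‖L₂‖₂ β) with β = (det(LᵀL))^{1/4}, both rows of X = D̂ Lᵀ have Euclidean norm β: ‖e₁ᵀX‖₂ = ‖e₂ᵀX‖₂ = β. -/

import Mathlib

open Matrix

noncomputable def enorm {m : ℕ} (v : Fin m → ℝ) : ℝ := Real.sqrt (∑ i, v i ^ 2)

noncomputable def frob {m n : ℕ} (A : Matrix (Fin m) (Fin n) ℝ) : ℝ :=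
  Real.sqrt (∑ i, ∑ j, A i j ^ 2)

noncomputable def specNorm {m n : ℕ} (A : Matrix (Fin m) (Fin n) ℝ) : ℝ :=
  ‖(Matrix.toEuclideanLin A).toContinuousLinearMap‖

noncomputable def sigmaMax (B : Matrix (Fin 2) (Fin 2) ℝ) : ℝ :=
  Real.sqrt (max ((show (Bᵀ * B).IsHermitian by
    simpa [Matrix.conjTranspose_eq_transpose_of_trivial] using Matrix.isHermitian_conjTranspose_mul_self B).eigenvalues 0)
                 ((show (Bᵀ * B).IsHermitian by
    simpa [Matrix.conjTranspose_eq_transpose_of_trivial] using Matrix.isHermitian_conjTranspose_mul_self B).eigenvalues 1))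

noncomputable def sigmaMin (B : Matrix (Fin 2) (Fin 2) ℝ) : ℝ :=
  Real.sqrt (min ((show (Bᵀ * B).IsHermitian by
    simpa [Matrix.conjTranspose_eq_transpose_of_trivial] using Matrix.isHermitian_conjTranspose_mul_self B).eigenvalues 0)
                 ((show (Bᵀ * B).IsHermitian by
    simpa [Matrix.conjTranspose_eq_transpose_of_trivial] using Matrix.isHermitian_conjTranspose_mul_self B).eigenvalues 1))

theorem rows_of_optimally_scaled {n : ℕ} (L : Matrix (Fin (2*n)) (Fin 2) ℝ)
    (hLI : LinearIndependent ℝ ![fun i => L i 0, fun i => L i 1])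
    (β cop fop : ℝ)
    (hβ : β = Real.sqrt (Real.sqrt (Lᵀ * L).det))
    (hc : cop = _root_.enorm (fun i => L i 1) / β)
    (hf : fop = -(∑ i, L i 0 * L i 1) / (_root_.enorm (fun i => L i 1) * β)) :
    _root_.enorm (fun j => ((!![cop, fop; 0, cop⁻¹] : Matrix (Fin 2) (Fin 2) ℝ) * Lᵀ) 0 j) = β ∧
    _root_.enorm (fun j => ((!![cop, fop; 0, cop⁻¹] : Matrix (Fin 2) (Fin 2) ℝ) * Lᵀ) 1 j) = β := by
  have pair := LinearIndependent.pair_iff.1 hLI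
  set a : ℝ := ∑ i, L i 0 ^ 2 with ha
  set b : ℝ := ∑ i, L i 1 ^ 2 with hb
  set c : ℝ := ∑ i, L i 0 * L i 1 with hcc
  have hbpos : 0 < b := by
    rcases (Finset.sum_nonneg (fun i _ => sq_nonneg (L i 1))).lt_or_eq with h | h
    · exact h
    have hz : ∀ i, L i 1 = 0 := fun i =>
      pow_eq_zero_iff (two_ne_zero) |>.1
        ((Finset.sum_eq_zero_iff_of_nonneg (fun i _ => sq_nonneg (L i 1))).1 h.symm i
          (Finset.mem_univ i))
    have h01 := (pair 0 1 (by
      funext i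
      simp [hz i])).2
    norm_num at h01
  have hcs : c ^ 2 < a * b := by
    rcases lt_or_eq_of_le (Finset.sum_mul_sq_le_sq_mul_sq Finset.univ
      (fun i => L i 0) (fun i => L i 1)) with h | h
    · exact h
    exfalso
    have hsum : ∑ i, (b * L i 0 - c * L i 1) ^ 2 = 0 := by
      have hexp : ∀ i, (b * L i 0 - c * L i 1) ^ 2 =
          b ^ 2 * L i 0 ^ 2 - 2 * (b * c) * (L i 0 * L i 1) + c ^ 2 * L i 1 ^ 2 :=
        fun i => by ring
      rw [Finset.sum_congr rfl (fun i _ => hexp i), Finset.sum_add_distrib,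
        Finset.sum_sub_distrib, ← Finset.mul_sum, ← Finset.mul_sum, ← Finset.mul_sum,
        ← ha, ← hb, ← hcc]
      nlinarith [h]
    have hz : ∀ i, b * L i 0 - c * L i 1 = 0 := fun i =>
      pow_eq_zero_iff (two_ne_zero) |>.1
        ((Finset.sum_eq_zero_iff_of_nonneg (fun i _ => sq_nonneg _)).1 hsum i
          (Finset.mem_univ i))
    have hb0 := (pair b (-c) (by
      funext i
      have := hz i
      simp only [Matrix.cons_val_zero, Matrix.cons_val_one, Matrix.head_cons,
        Pi.add_apply, Pi.smul_apply, smul_eq_mul, Pi.zero_apply]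
      linarith)).1
    exact hbpos.ne' hb0
  have hdet : (Lᵀ * L).det = a * b - c ^ 2 := by
    rw [Matrix.det_fin_two]
    simp only [Matrix.mul_apply, Matrix.transpose_apply, ← sq]
    rw [show (∑ x, L x 1 * L x 0) = c from by
      rw [hcc]; exact Finset.sum_congr rfl fun i _ => mul_comm _ _, ← ha, ← hb, ← hcc]
    ring
  have hdpos : 0 < a * b - c ^ 2 := by linarith
  have hβpos : 0 < β := by
    rw [hβ]
    exact Real.sqrt_pos.2 (Real.sqrt_pos.2 (by rw [hdet]; exact hdpos))
  have hβ2 : β ^ 2 = Real.sqrt (a * b - c ^ 2) := by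
    rw [hβ, Real.sq_sqrt (Real.sqrt_nonneg _), hdet]
  have hβ4 : β ^ 2 * β ^ 2 = a * b - c ^ 2 := by
    rw [hβ2, ← Real.sqrt_mul_self hdpos.le, Real.sqrt_mul_self hdpos.le,
      Real.mul_self_sqrt hdpos.le]
  set s : ℝ := Real.sqrt b with hsdef
  have hspos : 0 < s := Real.sqrt_pos.2 hbpos
  have hs2 : s ^ 2 = b := Real.sq_sqrt hbpos.le
  have hen : _root_.enorm (fun i => L i 1) = s := rfl
  rw [hen] at hc hf
  constructor
  · have hrow : ∀ j, ((!![cop, fop; 0, cop⁻¹] : Matrix (Fin 2) (Fin 2) ℝ) * Lᵀ) 0 j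
        = cop * L j 0 + fop * L j 1 := by
      intro j
      simp [Matrix.mul_apply, Fin.sum_univ_two]
    have hsum : ∑ j, (cop * L j 0 + fop * L j 1) ^ 2
        = cop ^ 2 * a + 2 * (cop * fop) * c + fop ^ 2 * b := by
      have hexp : ∀ j, (cop * L j 0 + fop * L j 1) ^ 2 =
          cop ^ 2 * L j 0 ^ 2 + 2 * (cop * fop) * (L j 0 * L j 1) + fop ^ 2 * L j 1 ^ 2 :=
        fun j => by ring
      rw [Finset.sum_congr rfl (fun j _ => hexp j), Finset.sum_add_distrib,
        Finset.sum_add_distrib, ← Finset.mul_sum, ← Finset.mul_sum, ← Finset.mul_sum]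
    have hval : cop ^ 2 * a + 2 * (cop * fop) * c + fop ^ 2 * b = β ^ 2 := by
      have step : cop ^ 2 * a + 2 * (cop * fop) * c + fop ^ 2 * b
          = (a * b - c ^ 2) / β ^ 2 := by
        rw [hc, hf, ← hs2]
        field_simp
        ring
      rw [step, hβ4.symm, mul_div_assoc, div_self (pow_ne_zero 2 hβpos.ne'), mul_one]
    unfold _root_.enorm
    simp_rw [hrow]
    rw [hsum, hval, Real.sqrt_sq hβpos.le]
  · have hrow : ∀ j, ((!![cop, fop; 0, cop⁻¹] : Matrix (Fin 2) (Fin 2) ℝ) * Lᵀ) 1 j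
        = cop⁻¹ * L j 1 := by
      intro j
      simp [Matrix.mul_apply, Fin.sum_univ_two]
    have hsum : ∑ j, (cop⁻¹ * L j 1) ^ 2 = cop⁻¹ ^ 2 * b := by
      rw [Finset.sum_congr rfl (fun j _ => by rw [mul_pow]), ← Finset.mul_sum]
    have hval : cop⁻¹ ^ 2 * b = β ^ 2 := by
      rw [hc, ← hs2]
      field_simp
    unfold _root_.enorm
    simp_rw [hrow]
    rw [hsum, hval, Real.sqrt_sq hβpos.le]
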